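/- arXiv:2604.22323 — 5 statements merged into one kernel-verified Lean document; each statement's English description precedes it below -/
import Mathlib

section
/- Let T : ℝ^N → ℂ^M be a real analytic map, and view its Fréchet derivative at each point θ as an ℝ-linear map ℝ^N → ℂ^M ≅ ℝ^{2M}. If there exists θ₀ ∈ ℝ^N such that fderiv ℝ T θ₀ is surjective (i.e., the real Jacobian has rank 2M), then the set {θ ∈ ℝ^N : fderiv ℝ T θ is not surjective} has Lebesgue measure zero; that is, the real Jacobian has rank 2M for almost every θ ∈ ℝ^N. -/
/-!
Fix bases and let `A θ` be the matrix of `fderiv ℝ T θ`. The derivative is surjective exactly when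
the Gram determinant `det (A θ * (A θ)ᵀ)` is nonzero, and this determinant is a polynomial in the
entries of `A θ`, hence a real-analytic function of `θ` that does not vanish at `θ₀`. The zero set
of a real-analytic function that is not identically zero is Lebesgue-null: in one variable its
zeros are isolated, hence countable, and in `n + 1` variables Fubini reduces the claim to `n`
variables, because for almost every first coordinate `t` the slice `f (t, ·)` is not identically
zero.
-/

open MeasureTheory Filter Function

theorem Matrix.mulVec_surjective_iff_det_mul_transpose_ne_zero {m n R : Type*}
    [Fintype m] [Fintype n] [DecidableEq m] [Field R] [LinearOrder R] [IsStrictOrderedRing R]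
    (A : Matrix m n R) : Surjective A.mulVec ↔ (A * A.transpose).det ≠ 0 := by
  rw [mulVec_surjective_iff_exists_right_inverse]
  constructor
  · rintro ⟨B, hB⟩
    -- `A Aᵀ` and `Aᵀ` have the same kernel, and `Aᵀ` is injective since `Bᵀ Aᵀ = 1`.
    have hker := ker_mulVecLin_transpose_mul_self A.transpose
    rw [transpose_transpose] at hker
    have hinj : Injective A.transpose.mulVec := fun v w hvw => by
      simpa [mulVec_mulVec, ← transpose_mul, hB] using congrArg B.transpose.mulVec hvw
    rw [← isUnit_iff_ne_zero, ← isUnit_iff_isUnit_det, ← mulVec_injective_iff_isUnit,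
      ← coe_mulVecLin, ← LinearMap.ker_eq_bot, hker, LinearMap.ker_eq_bot]
    exact hinj
  · intro h
    refine ⟨A.transpose * (A * A.transpose)⁻¹, ?_⟩
    rw [← Matrix.mul_assoc, mul_nonsing_inv _ (isUnit_iff_ne_zero.mpr h)]

theorem LinearMap.surjective_iff_surjective_toMatrix_mulVec {R M₁ M₂ ι κ : Type*} [CommRing R]
    [AddCommGroup M₁] [Module R M₁] [AddCommGroup M₂] [Module R M₂] [Fintype ι] [Fintype κ]
    [DecidableEq ι] (b : Module.Basis ι R M₁) (c : Module.Basis κ R M₂) (f : M₁ →ₗ[R] M₂) :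
    Surjective f ↔ Surjective (toMatrix b c f).mulVec := by
  have hconj : (toMatrix b c f).mulVec ∘ b.equivFun = c.equivFun ∘ f :=
    funext (toMatrix_mulVec_repr b c f)
  rw [← EquivLike.comp_surjective f c.equivFun, ← hconj, EquivLike.surjective_comp]

theorem analyticAt_matrix_det {𝕜 X A ι : Type*} [NontriviallyNormedField 𝕜]
    [NormedAddCommGroup X] [NormedSpace 𝕜 X] [NormedCommRing A] [NormedAlgebra 𝕜 A]
    [Fintype ι] [DecidableEq ι] {M : X → Matrix ι ι A} {x : X}
    (hM : ∀ i j, AnalyticAt 𝕜 (fun y => M y i j) x) :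
    AnalyticAt 𝕜 (fun y => (M y).det) x := by
  simp only [Matrix.det_apply']
  exact Finset.analyticAt_fun_sum _ fun σ _ =>
    analyticAt_const.mul (Finset.analyticAt_fun_prod _ fun i _ => hM (σ i) i)

section GramDeterminant

variable {E F ι κ : Type*} [NormedAddCommGroup E] [NormedSpace ℝ E] [NormedAddCommGroup F]
  [NormedSpace ℝ F] [Fintype ι] [Fintype κ] [DecidableEq ι]
  (b : Module.Basis ι ℝ E) (c : Module.Basis κ ℝ F)

theorem analyticAt_toMatrix_apply (i : κ) (j : ι) (L : E →L[ℝ] F) :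
    AnalyticAt ℝ (fun L' : E →L[ℝ] F => LinearMap.toMatrix b c L' i j) L := by
  have hcoord : (fun L' : E →L[ℝ] F => LinearMap.toMatrix b c L' i j) =
      (ContinuousLinearMap.proj i).comp
        ((c.equivFunL : F →L[ℝ] κ → ℝ).comp (ContinuousLinearMap.apply ℝ F (b j))) := by
    ext L'
    simp [LinearMap.toMatrix_apply]
  rw [hcoord]
  exact ContinuousLinearMap.analyticAt _ L

variable [DecidableEq κ]

noncomputable def gramDet (L : E →L[ℝ] F) : ℝ :=
  (LinearMap.toMatrix b c L * (LinearMap.toMatrix b c L).transpose).det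

theorem surjective_iff_gramDet_ne_zero (L : E →L[ℝ] F) : Surjective L ↔ gramDet b c L ≠ 0 :=
  (LinearMap.surjective_iff_surjective_toMatrix_mulVec b c L).trans
    (Matrix.mulVec_surjective_iff_det_mul_transpose_ne_zero _)

theorem analyticAt_gramDet (L : E →L[ℝ] F) : AnalyticAt ℝ (gramDet b c) L := by
  refine analyticAt_matrix_det fun i k => ?_
  simp only [Matrix.mul_apply, Matrix.transpose_apply]
  exact Finset.analyticAt_fun_sum _ fun j _ =>
    (analyticAt_toMatrix_apply b c i j L).mul (analyticAt_toMatrix_apply b c k j L)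

end GramDeterminant

section ZeroSets

variable {F : Type*} [NormedAddCommGroup F] [NormedSpace ℝ F]

theorem Real.ae_ne_zero_of_analyticAt {f : ℝ → F} (hf : ∀ x, AnalyticAt ℝ f x) {x₀ : ℝ}
    (hx₀ : f x₀ ≠ 0) : ∀ᵐ x, f x ≠ 0 := by
  have hle : ae (volume : Measure ℝ) ≤ codiscrete ℝ :=
    Measure.restrict_univ (μ := (volume : Measure ℝ)) ▸ ae_restrict_le_codiscreteWithin MeasurableSet.univ
  exact hle (AnalyticOnNhd.preimage_zero_mem_codiscrete (fun x _ => hf x) hx₀)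

theorem ae_prod_ne_zero_of_analyticAt {E : Type*} [NormedAddCommGroup E] [NormedSpace ℝ E]
    [MeasurableSpace E] [BorelSpace E] {μ : Measure E} [SFinite μ]
    (hμ : ∀ g : E → F, (∀ y, AnalyticAt ℝ g y) → ∀ y₀, g y₀ ≠ 0 → ∀ᵐ y ∂μ, g y ≠ 0)
    {f : ℝ × E → F} (hf : ∀ p, AnalyticAt ℝ f p) {p₀ : ℝ × E} (hp₀ : f p₀ ≠ 0) :
    ∀ᵐ p ∂(volume.prod μ), f p ≠ 0 := by
  have hf_cont : Continuous f := continuous_iff_continuousAt.mpr fun p => (hf p).continuousAt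
  have hmeas : MeasurableSet {p | f p ≠ 0} :=
    (isOpen_compl_singleton.preimage hf_cont).measurableSet
  rw [Measure.ae_prod_iff_ae_ae hmeas]
  have h_fst : ∀ᵐ t, f (t, p₀.2) ≠ 0 :=
    Real.ae_ne_zero_of_analyticAt (fun t => (hf _).comp (analyticAt_id.prod analyticAt_const)) hp₀
  filter_upwards [h_fst] with t ht
  exact hμ _ (fun y => (hf _).comp (analyticAt_const.prod analyticAt_id)) _ ht

theorem ae_pi_ne_zero_of_analyticAt :
    ∀ {n : ℕ} {f : (Fin n → ℝ) → F}, (∀ x, AnalyticAt ℝ f x) → ∀ {x₀}, f x₀ ≠ 0 →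
      ∀ᵐ x, f x ≠ 0
  | 0, f, _, x₀, hx₀ => Eventually.of_forall fun x => Subsingleton.elim x x₀ ▸ hx₀
  | n + 1, f, hf, x₀, hx₀ => by
    let e := Fin.consEquivL ℝ fun _ : Fin (n + 1) => ℝ
    have hcons : MeasurePreserving e volume volume := by
      have he : ⇑(MeasurableEquiv.piFinSuccAbove (fun _ : Fin (n + 1) => ℝ) 0).symm = e := by
        ext p : 1
        simp only [MeasurableEquiv.piFinSuccAbove_symm_apply, Fin.insertNthEquiv_zero]
        rfl
      exact he ▸ (volume_preserving_piFinSuccAbove (fun _ : Fin (n + 1) => ℝ) 0).symm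
    have hfe : ∀ᵐ p ∂(volume.prod volume), f (e p) ≠ 0 :=
      ae_prod_ne_zero_of_analyticAt (fun _ hg _ hy₀ => ae_pi_ne_zero_of_analyticAt hg hy₀)
        (fun p => (hf _).comp (e.analyticAt p)) (p₀ := e.symm x₀) (by simpa using hx₀)
    rw [← hcons.map_eq]
    exact e.toHomeomorph.measurableEmbedding.ae_map_iff.mpr hfe

theorem ae_ne_zero_of_analyticAt {E : Type*} [NormedAddCommGroup E] [NormedSpace ℝ E]
    [FiniteDimensional ℝ E] [MeasurableSpace E] [BorelSpace E] (μ : Measure E)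
    [μ.IsAddHaarMeasure] {f : E → F} (hf : ∀ x, AnalyticAt ℝ f x) {x₀ : E} (hx₀ : f x₀ ≠ 0) :
    ∀ᵐ x ∂μ, f x ≠ 0 := by
  let e := (Module.finBasis ℝ E).equivFunL.symm
  have hpi : ∀ᵐ y, f (e y) ≠ 0 :=
    ae_pi_ne_zero_of_analyticAt (fun y => (hf _).comp (e.analyticAt y)) (x₀ := e.symm x₀) (by simpa)
  exact (Measure.absolutelyContinuous_isAddHaarMeasure μ (volume.map e)).ae_le
    (e.toHomeomorph.measurableEmbedding.ae_map_iff.mpr hpi)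

end ZeroSets

theorem ae_surjective_fderiv_of_analyticAt {E F : Type*} [NormedAddCommGroup E]
    [NormedSpace ℝ E] [FiniteDimensional ℝ E] [MeasurableSpace E] [BorelSpace E]
    (μ : Measure E) [μ.IsAddHaarMeasure] [NormedAddCommGroup F] [NormedSpace ℝ F]
    [FiniteDimensional ℝ F] {T : E → F} (hT : ∀ x, AnalyticAt ℝ T x) {x₀ : E}
    (hx₀ : Surjective (fderiv ℝ T x₀)) : ∀ᵐ x ∂μ, Surjective (fderiv ℝ T x) := by
  have := FiniteDimensional.complete ℝ F
  let b := Module.finBasis ℝ E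
  let c := Module.finBasis ℝ F
  have hD : ∀ x, AnalyticAt ℝ (fun x => gramDet b c (fderiv ℝ T x)) x := fun x =>
    (analyticAt_gramDet b c _).comp (hT x).fderiv
  filter_upwards [ae_ne_zero_of_analyticAt μ hD ((surjective_iff_gramDet_ne_zero b c _).mp hx₀)]
    with x hx
  exact (surjective_iff_gramDet_ne_zero b c _).mpr hx

/-- **Lemma 1 (rank preservation almost everywhere).**
If `T : ℝ^N → ℂ^M` is real analytic and its real Fréchet derivative is surjective
(rank `2M`) at one point `θ₀`, then the set of points where it fails to be surjective has
Lebesgue measure zero. -/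
theorem rank_preservation_ae (N M : ℕ)
    (T : EuclideanSpace ℝ (Fin N) → EuclideanSpace ℂ (Fin M))
    (hT_analytic : ∀ θ, AnalyticAt ℝ T θ)
    (θ₀ : EuclideanSpace ℝ (Fin N))
    (hsurj : Function.Surjective (fderiv ℝ T θ₀)) :
    volume {θ : EuclideanSpace ℝ (Fin N) |
      ¬ Function.Surjective (fderiv ℝ T θ)} = 0 :=
  ae_iff.mp (ae_surjective_fderiv_of_analyticAt volume hT_analytic hsurj)
end

section
/- Let N, M be positive integers with N ≥ 2M. Let T : ℝ^N → ℂ^M be real analytic with T(θ) ≠ 0 for every θ, and suppose there exists θ₀ ∈ ℝ^N such that the real Fréchet derivative of T at θ₀ is surjective as an ℝ-linear map ℝ^N → ℂ^M. Then for Lebesgue-almost every θ ∈ ℝ^N, the real Fréchet derivative of the normalized map T̊(θ) = T(θ)/‖T(θ)‖, viewed as an ℝ-linear map ℝ^N → ℂ^M ≅ ℝ^{2M}, has rank exactly 2M − 1; that is, its range has real dimension 2M − 1. -/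
/-!
The normalized map takes values in the unit sphere, so the range of its derivative at `θ` lies
in the tangent space `(ℝ ∙ T θ)ᗮ`, of real dimension `2M - 1`, and it fills that space as soon
as `DT θ` is surjective. Surjectivity of `DT θ` is the non-vanishing of the Gram determinant
`det (DT θ ∘ (DT θ)†)`, a real-analytic function of `θ` that is nonzero at `θ₀`. The zero set of
a real-analytic function on `ℝⁿ` that is not identically zero is Lebesgue-null: by Fubini and
induction on `n`, starting from the discreteness of the zeros in one variable.
-/

open MeasureTheory Set Filter Topology ContinuousLinearMap
open scoped InnerProduct RealInnerProductSpace

section ZeroSet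

variable {F : Type*} [NormedAddCommGroup F] [NormedSpace ℝ F]

theorem AnalyticOnNhd.countable_setOf_eq_zero {f : ℝ → F} (hf : AnalyticOnNhd ℝ f univ)
    (h : f ≠ 0) : {t | f t = 0}.Countable := by
  rcases hf.eqOn_zero_or_eventually_ne_zero_of_preconnected isPreconnected_univ with h0 | h1
  · exact absurd (funext fun t => h0 (mem_univ t)) h
  · have hdisc := isDiscrete_of_codiscreteWithin (s := {t | f t = 0}) (U := univ) h1
    simpa using (HereditarilyLindelofSpace.isLindelof _).countable_of_isDiscrete hdisc

theorem AnalyticOnNhd.ae_ne_zero_pi {n : ℕ} {f : (Fin n → ℝ) → F}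
    (hf : AnalyticOnNhd ℝ f univ) (h : f ≠ 0) : ∀ᵐ x, f x ≠ 0 := by
  induction n with
  | zero =>
    obtain ⟨x₀, hx₀⟩ := Function.ne_iff.mp h
    exact .of_forall fun x => Subsingleton.elim x₀ x ▸ hx₀
  | succ n ih =>
    set g : ℝ × (Fin n → ℝ) → F := fun p => f (Fin.cons p.1 p.2)
    have hg : AnalyticOnNhd ℝ g univ := fun p _ =>
      (hf _ trivial).comp ((Fin.consEquivL ℝ fun _ => ℝ).analyticAt p)
    obtain ⟨p₀, hp₀⟩ : ∃ p, g p ≠ 0 := by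
      obtain ⟨x₀, hx₀⟩ := Function.ne_iff.mp h
      exact ⟨(x₀ 0, Fin.tail x₀), by simpa [g] using hx₀⟩
    have hline : ∀ᵐ t : ℝ, g (t, p₀.2) ≠ 0 := by
      refine measure_eq_zero_iff_ae_notMem.mp (Countable.measure_zero ?_ _)
      refine countable_setOf_eq_zero (fun t _ => (hg (t, p₀.2) trivial).curry_left) ?_
      exact Function.ne_iff.mpr ⟨p₀.1, hp₀⟩
    have hslices : ∀ᵐ t : ℝ, ∀ᵐ y, g (t, y) ≠ 0 := hline.mono fun t ht =>
      ih (fun y _ => (hg (t, y) trivial).curry_right) (Function.ne_iff.mpr ⟨p₀.2, ht⟩)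
    have hg_cont : Continuous g := continuousOn_univ.mp hg.continuousOn
    have hprod : ∀ᵐ p ∂(volume.prod volume), g p ≠ 0 :=
      (Measure.ae_prod_iff_ae_ae
        (isClosed_eq hg_cont continuous_const).isOpen_compl.measurableSet).2 hslices
    simpa [g] using
      (volume_preserving_piFinSuccAbove (fun _ : Fin (n + 1) => ℝ) 0).quasiMeasurePreserving.ae
        hprod

theorem AnalyticOnNhd.ae_ne_zero {E : Type*} [NormedAddCommGroup E] [NormedSpace ℝ E]
    [FiniteDimensional ℝ E] [MeasurableSpace E] [BorelSpace E] (μ : Measure E)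
    [μ.IsAddHaarMeasure] {f : E → F} (hf : AnalyticOnNhd ℝ f univ) (h : f ≠ 0) :
    ∀ᵐ x ∂μ, f x ≠ 0 := by
  let L : E ≃L[ℝ] (Fin (Module.finrank ℝ E) → ℝ) := .ofFinrankEq (by simp)
  have hfL : ∀ᵐ y, f (L.symm y) ≠ 0 := by
    refine ae_ne_zero_pi (fun y _ => (hf _ trivial).comp (L.symm.analyticAt y)) ?_
    obtain ⟨x₀, hx₀⟩ := Function.ne_iff.mp h
    exact Function.ne_iff.mpr ⟨L x₀, by simpa using hx₀⟩
  have hmap : ∀ᵐ y ∂μ.map L, f (L.symm y) ≠ 0 :=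
    (Measure.absolutelyContinuous_isAddHaarMeasure _ volume).ae_le hfL
  simpa using ae_of_ae_map L.continuous.aemeasurable hmap

end ZeroSet

section Determinant

variable {𝕜 X F : Type*} [NontriviallyNormedField 𝕜]
  [NormedAddCommGroup X] [NormedSpace 𝕜 X] [NormedAddCommGroup F] [NormedSpace 𝕜 F]

theorem analyticAt_matrix_det_s4 {d : Type*} [Fintype d] [DecidableEq d]
    {m : X → Matrix d d 𝕜} {θ : X} (hm : ∀ i j, AnalyticAt 𝕜 (fun x => m x i j) θ) :
    AnalyticAt 𝕜 (fun x => (m x).det) θ := by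
  simp_rw [Matrix.det_apply, Units.smul_def, zsmul_eq_mul]
  exact Finset.analyticAt_fun_sum _ fun σ _ =>
    analyticAt_const.mul (Finset.analyticAt_fun_prod _ fun i _ => hm _ _)

theorem AnalyticAt.linearMap_det [CompleteSpace 𝕜] [FiniteDimensional 𝕜 F]
    {g : X → F →L[𝕜] F} {θ : X} (hg : AnalyticAt 𝕜 g θ) :
    AnalyticAt 𝕜 (fun x => LinearMap.det (g x : F →ₗ[𝕜] F)) θ := by
  let b := Module.finBasis 𝕜 F
  have hdet : (fun x => LinearMap.det (g x : F →ₗ[𝕜] F)) =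
      fun x => (LinearMap.toMatrix b b (g x)).det :=
    funext fun x => (LinearMap.det_toMatrix b _).symm
  rw [hdet]
  refine analyticAt_matrix_det_s4 fun i j => ?_
  simp only [LinearMap.toMatrix_apply]
  exact (((b.coord i).toContinuousLinearMap.comp (apply 𝕜 F (b j))).analyticAt _).comp hg

end Determinant

theorem ContinuousLinearMap.det_comp_adjoint_ne_zero_iff {𝕜 E F : Type*} [RCLike 𝕜]
    [NormedAddCommGroup E] [InnerProductSpace 𝕜 E] [CompleteSpace E]
    [NormedAddCommGroup F] [InnerProductSpace 𝕜 F] [CompleteSpace F] [FiniteDimensional 𝕜 F]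
    (A : E →L[𝕜] F) :
    LinearMap.det (A ∘L A† : F →ₗ[𝕜] F) ≠ 0 ↔ Function.Surjective A := by
  have hker : LinearMap.ker (A ∘L A† : F →ₗ[𝕜] F) = (LinearMap.range (A : E →ₗ[𝕜] F))ᗮ := by
    have := ker_adjoint_comp_self (A†)
    rw [adjoint_adjoint] at this
    exact this.trans (orthogonal_range A).symm
  rw [Ne, LinearMap.det_eq_zero_iff_ker_ne_bot, not_not, hker, Submodule.orthogonal_eq_bot_iff,
    LinearMap.range_eq_top, coe_coe]

theorem AnalyticAt.adjoint {X E F : Type*} [NormedAddCommGroup X] [NormedSpace ℝ X]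
    [NormedAddCommGroup E] [InnerProductSpace ℝ E] [CompleteSpace E]
    [NormedAddCommGroup F] [InnerProductSpace ℝ F] [CompleteSpace F]
    {g : X → E →L[ℝ] F} {θ : X} (hg : AnalyticAt ℝ g θ) :
    AnalyticAt ℝ (fun x => (g x)†) θ :=
  (((ContinuousLinearMap.adjoint : (E →L[ℝ] F) ≃ₗᵢ⋆[ℝ] (F →L[ℝ] E)).toContinuousLinearEquiv :
    (E →L[ℝ] F) ≃L[ℝ] (F →L[ℝ] E)).analyticAt _).comp hg

section Normalize

variable {E F : Type*} [NormedAddCommGroup E] [NormedSpace ℝ E]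
  [NormedAddCommGroup F] [InnerProductSpace ℝ F] {θ : E}

theorem range_fderiv_le_orthogonal_of_norm_eq_one {g : E → F} (hg : DifferentiableAt ℝ g θ)
    (hnorm : ∀ᶠ x in 𝓝 θ, ‖g x‖ = 1) :
    LinearMap.range (fderiv ℝ g θ : E →ₗ[ℝ] F) ≤ (ℝ ∙ g θ)ᗮ := by
  have hconst : HasFDerivAt (‖g ·‖ ^ 2) (0 : E →L[ℝ] ℝ) θ :=
    (hasFDerivAt_const 1 θ).congr_of_eventuallyEq (hnorm.mono fun x hx => by simp [hx])
  have hzero := hg.hasFDerivAt.norm_sq.unique hconst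
  rintro _ ⟨v, rfl⟩
  rw [Submodule.mem_orthogonal_singleton_iff_inner_right]
  simpa using congrArg (· v) hzero

theorem range_fderiv_le_range_fderiv_normalize_sup {T : E → F} (hT : DifferentiableAt ℝ T θ)
    (h0 : T θ ≠ 0) :
    LinearMap.range (fderiv ℝ T θ : E →ₗ[ℝ] F) ≤
      LinearMap.range (fderiv ℝ (fun x => ‖T x‖⁻¹ • T x) θ : E →ₗ[ℝ] F) ⊔ (ℝ ∙ T θ) := by
  have hc : DifferentiableAt ℝ (fun x => ‖T x‖⁻¹) θ := (hT.norm ℝ h0).inv (norm_ne_zero_iff.2 h0)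
  rintro _ ⟨v, rfl⟩
  have hv : fderiv ℝ T θ v = ‖T θ‖ • (fderiv ℝ (fun x => ‖T x‖⁻¹ • T x) θ v
      - fderiv ℝ (fun x => ‖T x‖⁻¹) θ v • T θ) := by
    rw [fderiv_fun_smul hc hT]
    simp [smul_smul, norm_ne_zero_iff.2 h0]
  rw [ContinuousLinearMap.coe_coe, hv]
  exact Submodule.smul_mem _ _ (Submodule.sub_mem _
    (Submodule.mem_sup_left (LinearMap.mem_range_self _ v))
    (Submodule.mem_sup_right (Submodule.smul_mem _ _ (Submodule.mem_span_singleton_self _))))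

theorem range_fderiv_normalize {T : E → F} (hT : DifferentiableAt ℝ T θ)
    (hne : ∀ᶠ x in 𝓝 θ, T x ≠ 0)
    (hspan : LinearMap.range (fderiv ℝ T θ : E →ₗ[ℝ] F) ⊔ (ℝ ∙ T θ) = ⊤) :
    LinearMap.range (fderiv ℝ (fun x => ‖T x‖⁻¹ • T x) θ : E →ₗ[ℝ] F) = (ℝ ∙ T θ)ᗮ := by
  have h0 : T θ ≠ 0 := hne.self_of_nhds
  have hc : DifferentiableAt ℝ (fun x => ‖T x‖⁻¹) θ := (hT.norm ℝ h0).inv (norm_ne_zero_iff.2 h0)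
  have hle := range_fderiv_le_orthogonal_of_norm_eq_one (hc.fun_smul hT)
    (hne.mono fun x hx => by simp [norm_smul, hx])
  rw [Submodule.span_singleton_smul_eq (inv_ne_zero (norm_ne_zero_iff.2 h0)).isUnit] at hle
  refine eq_of_le_of_inf_le_of_le_sup (z := ℝ ∙ T θ) hle ?_ ?_
  · rw [inf_comm, Submodule.inf_orthogonal_eq_bot]
    exact bot_le
  · refine le_top.trans (hspan.ge.trans ?_)
    exact sup_le (range_fderiv_le_range_fderiv_normalize_sup hT h0) le_sup_right

end Normalize

theorem normalized_map_rank_ae_general (N M : ℕ)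
    (T : EuclideanSpace ℝ (Fin N) → EuclideanSpace ℂ (Fin M))
    (hT_analytic : ∀ θ, AnalyticAt ℝ T θ)
    (hT_ne : ∀ θ, T θ ≠ 0)
    (θ₀ : EuclideanSpace ℝ (Fin N))
    (hsurj : Function.Surjective (fderiv ℝ T θ₀)) :
    ∀ᵐ θ ∂(volume : Measure (EuclideanSpace ℝ (Fin N))),
      Module.finrank ℝ
        (LinearMap.range (fderiv ℝ (fun θ' => ‖T θ'‖⁻¹ • T θ') θ :
          EuclideanSpace ℝ (Fin N) →ₗ[ℝ] EuclideanSpace ℂ (Fin M))) = 2 * M - 1 := by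
  set gram := fun θ => LinearMap.det
    (fderiv ℝ T θ ∘L (fderiv ℝ T θ)† : EuclideanSpace ℂ (Fin M) →ₗ[ℝ] EuclideanSpace ℂ (Fin M))
  have hgram : AnalyticOnNhd ℝ gram univ := fun θ _ => by
    have hDT := (hT_analytic θ).fderiv
    exact (((compL ℝ _ _ _).analyticAt_bilinear _).comp₂ hDT hDT.adjoint).linearMap_det
  have hgram₀ : gram ≠ 0 :=
    Function.ne_iff.mpr ⟨θ₀, (det_comp_adjoint_ne_zero_iff _).mpr hsurj⟩
  filter_upwards [hgram.ae_ne_zero volume hgram₀] with θ hθ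
  have hspan : LinearMap.range (fderiv ℝ T θ : EuclideanSpace ℝ (Fin N) →ₗ[ℝ] _) ⊔
      (ℝ ∙ T θ) = ⊤ := by
    rw [LinearMap.range_eq_top.mpr ((det_comp_adjoint_ne_zero_iff _).mp hθ), top_sup_eq]
  rw [range_fderiv_normalize (hT_analytic θ).differentiableAt (.of_forall hT_ne) hspan]
  have hdim := Submodule.finrank_add_finrank_orthogonal (ℝ ∙ T θ)
  rw [finrank_span_singleton (hT_ne θ), finrank_real_of_complex, finrank_euclideanSpace_fin] at hdim
  omega

/-- **Lemma 2 (the normalized map is a submersion onto the sphere almost everywhere).**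
Under the hypotheses of Theorem 1, for Lebesgue-almost every `θ` the real Fréchet derivative
of the normalized map `T̊(θ) = T(θ)/‖T(θ)‖` has rank exactly `2M − 1`. -/
theorem normalized_map_rank_ae (N M : ℕ) (hM : 0 < M) (hNM : 2 * M ≤ N)
    (T : EuclideanSpace ℝ (Fin N) → EuclideanSpace ℂ (Fin M))
    (hT_analytic : ∀ θ, AnalyticAt ℝ T θ)
    (hT_ne : ∀ θ, T θ ≠ 0)
    (θ₀ : EuclideanSpace ℝ (Fin N))
    (hsurj : Function.Surjective (fderiv ℝ T θ₀)) :
    ∀ᵐ θ ∂(volume : Measure (EuclideanSpace ℝ (Fin N))),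
      Module.finrank ℝ
        (LinearMap.range (fderiv ℝ (fun θ' => ‖T θ'‖⁻¹ • T θ') θ :
          EuclideanSpace ℝ (Fin N) →ₗ[ℝ] EuclideanSpace ℂ (Fin M))) = 2 * M - 1 :=
  normalized_map_rank_ae_general N M T hT_analytic hT_ne θ₀ hsurj
end

section
/- Let n be a finite index type, let Z be an n × n complex matrix that is complex symmetric (Zᵀ = Z), write Z = R + iX where R and X are the entrywise real and imaginary parts of Z (so R and X are real symmetric matrices), assume R is positive semidefinite, and let R_d > 0 be a real number. Then for every θ ∈ ℝ^n the matrix A(θ) = i·diag(θ) + R_d·I + Z is invertible, where diag(θ) is the diagonal complex matrix with diagonal entries θ_1, …, θ_n and I is the identity matrix. -/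
/-!
Write `A(θ) = H + i K` with `H = R_d I + R` and `K = diag θ + X`. Since `Z` is symmetric, its
real and imaginary parts are real symmetric, so `H` is positive definite and `K` is Hermitian.
Then `x* K x` is real, hence `Re (x* A x) = x* H x > 0` for `x ≠ 0`, and `A x = 0` forces `x = 0`.
-/

open Matrix
open scoped ComplexOrder

namespace Matrix

variable {n : Type*}

theorem isUnit_of_re_dotProduct_mulVec_pos {𝕜 : Type*} [RCLike 𝕜] [Fintype n] [DecidableEq n]
    {A : Matrix n n 𝕜} (hA : ∀ x ≠ 0, 0 < RCLike.re (star x ⬝ᵥ A *ᵥ x)) : IsUnit A := by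
  rw [isUnit_iff_isUnit_det, isUnit_iff_ne_zero]
  intro hdet
  obtain ⟨x, hx0, hx⟩ := exists_mulVec_eq_zero_iff.mpr hdet
  simpa [hx] using hA x hx0

theorem PosDef.isUnit_add_I_smul [Fintype n] [DecidableEq n] {H K : Matrix n n ℂ} (hH : H.PosDef)
    (hK : K.IsHermitian) : IsUnit (H + Complex.I • K) := by
  refine isUnit_of_re_dotProduct_mulVec_pos fun x hx ↦ ?_
  have hKx : RCLike.re (star x ⬝ᵥ (Complex.I • K) *ᵥ x) = 0 := by
    simpa [smul_mulVec, dotProduct_smul] using hK.im_star_dotProduct_mulVec_self x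
  rw [add_mulVec, dotProduct_add, map_add, hKx, add_zero]
  exact hH.re_dotProduct_pos hx

theorem re_star_dotProduct_map_ofReal_mulVec [Fintype n] (R : Matrix n n ℝ) (x : n → ℂ) :
    (star x ⬝ᵥ R.map Complex.ofReal *ᵥ x).re =
      (fun i ↦ (x i).re) ⬝ᵥ R *ᵥ (fun i ↦ (x i).re) +
        (fun i ↦ (x i).im) ⬝ᵥ R *ᵥ (fun i ↦ (x i).im) := by
  simp only [dotProduct, mulVec, map_apply, Complex.re_sum, Finset.mul_sum,
    ← Finset.sum_add_distrib]
  refine Finset.sum_congr rfl fun i _ ↦ Finset.sum_congr rfl fun j _ ↦ ?_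
  simp [Complex.mul_re, Complex.mul_im]

theorem PosSemidef.map_ofReal [Fintype n] {R : Matrix n n ℝ} (hR : R.PosSemidef) :
    (R.map Complex.ofReal).PosSemidef := by
  have hH : (R.map Complex.ofReal).IsHermitian :=
    hR.isHermitian.map _ fun r ↦ (Complex.conj_ofReal r).symm
  refine .of_dotProduct_mulVec_nonneg hH fun x ↦ Complex.nonneg_iff.mpr ⟨?_, ?_⟩
  · rw [re_star_dotProduct_map_ofReal_mulVec]
    simpa using add_nonneg (hR.dotProduct_mulVec_nonneg _) (hR.dotProduct_mulVec_nonneg _)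
  · exact (hH.im_star_dotProduct_mulVec_self x).symm

theorem IsSymm.isHermitian_map_ofReal_map_im {Z : Matrix n n ℂ} (hZ : Z.IsSymm) :
    ((Z.map Complex.im).map Complex.ofReal).IsHermitian := by
  refine IsHermitian.map ?_ _ fun r ↦ (Complex.conj_ofReal r).symm
  ext i j
  simp [← congrFun (congrFun hZ i) j]

theorem map_ofReal_map_re_add_I_smul (Z : Matrix n n ℂ) :
    (Z.map Complex.re).map Complex.ofReal + Complex.I • (Z.map Complex.im).map Complex.ofReal
      = Z := by
  ext i j
  simp [mul_comm Complex.I, Complex.re_add_im]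

end Matrix

/-- **Lemma 3 (invertibility of the loaded impedance matrix).**
If `Z` is complex symmetric with positive semidefinite entrywise real part `R`, and
`R_d > 0`, then `A(θ) = i·diag(θ) + R_d·I + Z` is invertible for every real load vector
`θ`. -/
theorem loaded_impedance_invertible {n : Type*} [Fintype n] [DecidableEq n]
    (Z : Matrix n n ℂ) (hZsym : Zᵀ = Z)
    (hR : (Matrix.of fun i j => (Z i j).re : Matrix n n ℝ).PosSemidef)
    (Rd : ℝ) (hRd : 0 < Rd) :
    ∀ θ : n → ℝ,
      IsUnit (Complex.I • Matrix.diagonal (fun k => (θ k : ℂ)) +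
        (Rd : ℂ) • (1 : Matrix n n ℂ) + Z) := by
  intro θ
  have hH : ((Rd : ℂ) • 1 + (Z.map Complex.re).map Complex.ofReal).PosDef :=
    (PosDef.one.smul (Complex.zero_lt_real.mpr hRd)).add_posSemidef (PosSemidef.map_ofReal hR)
  have hK : (diagonal (fun k ↦ (θ k : ℂ)) + (Z.map Complex.im).map Complex.ofReal).IsHermitian :=
    (isHermitian_diagonal_of_self_adjoint _ (funext fun k ↦ Complex.conj_ofReal (θ k))).add
      (IsSymm.isHermitian_map_ofReal_map_im hZsym)
  convert hH.isUnit_add_I_smul hK using 1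
  conv_lhs => rw [← map_ofReal_map_re_add_I_smul Z]
  rw [smul_add]
  abel
end

section
/- Let n be a finite index type, let Z be an n × n complex symmetric matrix (Zᵀ = Z) whose entrywise real part is positive semidefinite, let R_d > 0 be real, let F be an M × n complex matrix and v ∈ ℂ^n. Define A(θ) = i·diag(θ) + R_d·I + Z and T(θ) = F · A(θ)⁻¹ · v. Then for every θ ∈ ℝ^n and every index k ∈ n, the directional derivative of T at θ in the direction of the standard basis vector e_k equals −i · (A(θ)⁻¹ v)_k · (F · A(θ)⁻¹) e_k; that is, the m-th component of fderiv ℝ T θ (e_k) is −i · (A(θ)⁻¹ *ᵥ v)_k · (F · A(θ)⁻¹)_{m,k}. Equivalently, the complex Jacobian matrix of T at θ is −i · F · A(θ)⁻¹ · diag(A(θ)⁻¹ v). -/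
/-!
Write `x = a + i b`. For a symmetric `Z` the imaginary part of `Z` only contributes the
antisymmetric form `aᵀ (Im Z) b - bᵀ (Im Z) a = 0` to `Re (x* Z x)`, so
`Re (x* Z x) = aᵀ (Re Z) a + bᵀ (Re Z) b ≥ 0`; the term `i·diag θ` is skew-Hermitian, hence
`Re (x* A(θ) x) ≥ R_d ‖x‖² > 0` for `x ≠ 0` and `A(θ)` is invertible.
Since `θ ↦ A(θ)` is affine with derivative `h ↦ i·diag h`, the derivative of matrix inversion gives
`dT(h) = -F A⁻¹ (i·diag h) A⁻¹ v`, and `diag(h) w = diag(w) h` turns this into the Jacobian.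
-/

open Matrix ComplexOrder

/-- The loaded impedance matrix `A(θ) = i·diag(θ) + R_d·I + Z` of a DSA. -/
noncomputable def loadedMatrix {n : Type*} [Fintype n] [DecidableEq n]
    (Z : Matrix n n ℂ) (Rd : ℝ) (θ : n → ℝ) : Matrix n n ℂ :=
  Complex.I • Matrix.diagonal (fun k => (θ k : ℂ)) + (Rd : ℂ) • (1 : Matrix n n ℂ) + Z

namespace Matrix

variable {n : Type*} [Fintype n]

theorem isUnit_of_star_dotProduct_mulVec_ne_zero {K : Type*} [Field K] [Star K] [DecidableEq n]
    {A : Matrix n n K} (h : ∀ x ≠ 0, star x ⬝ᵥ A *ᵥ x ≠ 0) : IsUnit A := by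
  rw [isUnit_iff_isUnit_det, isUnit_iff_ne_zero]
  intro hdet
  obtain ⟨x, hx, hAx⟩ := exists_mulVec_eq_zero_iff.2 hdet
  exact h x hx (by rw [hAx, dotProduct_zero])

theorem re_star_dotProduct_mulVec_self_of_transpose_eq {Z : Matrix n n ℂ} (hZ : Zᵀ = Z)
    (x : n → ℂ) :
    (star x ⬝ᵥ Z *ᵥ x).re =
      (fun i => (x i).re) ⬝ᵥ Z.map Complex.re *ᵥ (fun i => (x i).re) +
        (fun i => (x i).im) ⬝ᵥ Z.map Complex.re *ᵥ (fun i => (x i).im) := by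
  have hsymm : ∑ i, ∑ j, (Z i j).im * ((x i).re * (x j).im) =
      ∑ i, ∑ j, (Z i j).im * ((x i).im * (x j).re) := by
    rw [Finset.sum_comm]
    refine Finset.sum_congr rfl fun i _ => Finset.sum_congr rfl fun j _ => ?_
    rw [← congrFun (congrFun hZ i) j, transpose_apply]
    ring
  simp only [dotProduct, mulVec, Finset.mul_sum, Complex.re_sum, map_apply, Pi.star_apply,
    Complex.star_def, Complex.mul_re, Complex.mul_im, Complex.conj_re, Complex.conj_im]
  rw [← sub_eq_zero, ← sub_eq_zero.mpr hsymm.symm]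
  simp only [← Finset.sum_sub_distrib, ← Finset.sum_add_distrib]
  exact Finset.sum_congr rfl fun i _ => Finset.sum_congr rfl fun j _ => by ring

end Matrix

section LoadedMatrix

variable {n : Type*} [Fintype n] [DecidableEq n]

theorem isUnit_loadedMatrix {Z : Matrix n n ℂ} (hZsym : Zᵀ = Z)
    (hR : (Matrix.of fun i j => (Z i j).re : Matrix n n ℝ).PosSemidef) {Rd : ℝ} (hRd : 0 < Rd)
    (θ : n → ℝ) : IsUnit (loadedMatrix Z Rd θ) := by
  refine isUnit_of_star_dotProduct_mulVec_ne_zero fun x hx hzero => ?_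
  have hquad : star x ⬝ᵥ loadedMatrix Z Rd θ *ᵥ x =
      Complex.I * (star x ⬝ᵥ diagonal (fun k => (θ k : ℂ)) *ᵥ x) + Rd * (star x ⬝ᵥ x) +
        star x ⬝ᵥ Z *ᵥ x := by
    simp only [loadedMatrix, add_mulVec, smul_mulVec, one_mulVec, dotProduct_add, dotProduct_smul,
      smul_eq_mul]
  have hdiag : (star x ⬝ᵥ diagonal (fun k => (θ k : ℂ)) *ᵥ x).im = 0 :=
    (isHermitian_diagonal_of_self_adjoint _ (by ext; simp)).im_star_dotProduct_mulVec_self x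
  have hnorm : 0 < (star x ⬝ᵥ x).re := (Complex.pos_iff.1 (dotProduct_star_self_pos_iff.2 hx)).1
  have hZ : 0 ≤ (star x ⬝ᵥ Z *ᵥ x).re := by
    rw [re_star_dotProduct_mulVec_self_of_transpose_eq hZsym,
      show Z.map Complex.re = of fun i j => (Z i j).re from rfl]
    simpa using add_nonneg (hR.dotProduct_mulVec_nonneg fun i => (x i).re)
      (hR.dotProduct_mulVec_nonneg fun i => (x i).im)
  have hre := congrArg Complex.re hzero
  simp only [hquad, Complex.add_re, Complex.mul_re, Complex.I_re, Complex.I_im, hdiag,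
    Complex.ofReal_re, Complex.ofReal_im, Complex.zero_re] at hre
  nlinarith

-- Any norm on matrices would do: no matrix norm appears in the final statement.
attribute [local instance] Matrix.linftyOpNormedRing Matrix.linftyOpNormedAlgebra

theorem Matrix.hasFDerivAt_inv {𝕜 E : Type*} [RCLike 𝕜] [NormedAddCommGroup E] [NormedSpace ℝ E]
    {A : E → Matrix n n 𝕜} {A' : E →L[ℝ] Matrix n n 𝕜} {x : E} (hA : HasFDerivAt A A' x)
    (hx : IsUnit (A x)) :
    HasFDerivAt (fun y => (A y)⁻¹)
      ((-ContinuousLinearMap.mulLeftRight ℝ _ (A x)⁻¹ (A x)⁻¹).comp A') x := by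
  obtain ⟨u, hu⟩ := hx
  simp only [nonsing_inv_eq_ringInverse, ← hu, Ring.inverse_unit]
  exact (hu ▸ hasFDerivAt_ringInverse u).comp x hA

noncomputable def loadedMatrixDeriv (n : Type*) [Fintype n] [DecidableEq n] :
    (n → ℝ) →L[ℝ] Matrix n n ℂ :=
  LinearMap.toContinuousLinearMap
    (Complex.I • (diagonalLinearMap n ℝ ℂ).comp (Complex.ofRealCLM.toLinearMap.compLeft n))

theorem loadedMatrixDeriv_apply (h : n → ℝ) :
    loadedMatrixDeriv n h = Complex.I • diagonal fun k => (h k : ℂ) := rfl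

theorem hasFDerivAt_loadedMatrix (Z : Matrix n n ℂ) (Rd : ℝ) (θ : n → ℝ) :
    HasFDerivAt (loadedMatrix Z Rd) (loadedMatrixDeriv n) θ := by
  have hsplit : loadedMatrix Z Rd = fun θ => loadedMatrixDeriv n θ + ((Rd : ℂ) • 1 + Z) := by
    ext1 θ
    rw [loadedMatrixDeriv_apply, loadedMatrix, add_assoc]
  rw [hsplit]
  exact (loadedMatrixDeriv n).hasFDerivAt.add_const _

theorem fderiv_mulVec_loadedMatrix_inv_mulVec {m : Type*} [Fintype m] {Z : Matrix n n ℂ}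
    {Rd : ℝ} {θ : n → ℝ} (hθ : IsUnit (loadedMatrix Z Rd θ)) (F : Matrix m n ℂ) (v : n → ℂ)
    (h : n → ℝ) :
    fderiv ℝ (fun θ => F *ᵥ ((loadedMatrix Z Rd θ)⁻¹ *ᵥ v)) θ h =
      (-Complex.I) • (F * (loadedMatrix Z Rd θ)⁻¹ *
        diagonal ((loadedMatrix Z Rd θ)⁻¹ *ᵥ v)) *ᵥ fun k => (h k : ℂ) := by
  let L : Matrix n n ℂ →L[ℝ] (m → ℂ) := LinearMap.toContinuousLinearMap
    { toFun B := F *ᵥ (B *ᵥ v)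
      map_add' B C := by simp only [add_mulVec, mulVec_add]
      map_smul' r B := by simp only [smul_mulVec, mulVec_smul, RingHom.id_apply] }
  have hT : HasFDerivAt (fun θ => F *ᵥ ((loadedMatrix Z Rd θ)⁻¹ *ᵥ v)) _ θ :=
    L.hasFDerivAt.comp θ (Matrix.hasFDerivAt_inv (hasFDerivAt_loadedMatrix Z Rd θ) hθ)
  rw [hT.fderiv]
  set A := loadedMatrix Z Rd θ
  have hswap : (diagonal fun k => (h k : ℂ)) *ᵥ (A⁻¹ *ᵥ v) =
      diagonal (A⁻¹ *ᵥ v) *ᵥ fun k => (h k : ℂ) := by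
    ext i
    simp only [mulVec_diagonal, mul_comm]
  change F *ᵥ (-(A⁻¹ * (Complex.I • diagonal fun k => (h k : ℂ)) * A⁻¹) *ᵥ v) = _
  simp only [neg_mulVec, mulVec_neg, smul_mulVec, ← mulVec_mulVec, mulVec_smul, hswap, neg_smul]

end LoadedMatrix

/-- **Jacobian of the DSA response (equations (22)–(23) of the paper).**
For `T(θ) = F·A(θ)⁻¹·v` with `A(θ) = i·diag(θ) + R_d·I + Z`, the directional derivative of
`T` at `θ` along the `k`-th standard basis vector is `−i·(A(θ)⁻¹v)_k · (F·A(θ)⁻¹)e_k`;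
equivalently, the complex Jacobian matrix of `T` at `θ` is
`−i · F·A(θ)⁻¹·diag(A(θ)⁻¹v)`. -/
theorem dsa_response_jacobian {n : Type*} [Fintype n] [DecidableEq n] (M : ℕ)
    (Z : Matrix n n ℂ) (hZsym : Zᵀ = Z)
    (hR : (Matrix.of fun i j => (Z i j).re : Matrix n n ℝ).PosSemidef)
    (Rd : ℝ) (hRd : 0 < Rd)
    (F : Matrix (Fin M) n ℂ) (v : n → ℂ)
    (T : (n → ℝ) → (Fin M → ℂ))
    (hT : ∀ θ, T θ = F *ᵥ ((loadedMatrix Z Rd θ)⁻¹ *ᵥ v)) :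
    ∀ (θ : n → ℝ) (k : n),
      (∀ m : Fin M, fderiv ℝ T θ (Pi.single k 1) m =
        -Complex.I * ((loadedMatrix Z Rd θ)⁻¹ *ᵥ v) k *
          (F * (loadedMatrix Z Rd θ)⁻¹) m k) ∧
      Matrix.of (fun (m : Fin M) (k' : n) => fderiv ℝ T θ (Pi.single k' 1) m) =
        (-Complex.I) • (F * (loadedMatrix Z Rd θ)⁻¹ *
          Matrix.diagonal ((loadedMatrix Z Rd θ)⁻¹ *ᵥ v)) := by
  intro θ k
  have hcast (k' : n) : (fun j => ((Pi.single k' 1 : n → ℝ) j : ℂ)) = Pi.single k' 1 :=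
    funext fun j => by simp [Pi.single_apply, apply_ite]
  have hentry (k' : n) (m : Fin M) : fderiv ℝ T θ (Pi.single k' 1) m =
      -Complex.I * ((loadedMatrix Z Rd θ)⁻¹ *ᵥ v) k' * (F * (loadedMatrix Z Rd θ)⁻¹) m k' := by
    rw [funext hT, fderiv_mulVec_loadedMatrix_inv_mulVec (isUnit_loadedMatrix hZsym hR hRd θ),
      hcast, mulVec_single_one]
    simp only [Pi.smul_apply, col_apply, mul_diagonal, smul_eq_mul]
    ring
  refine ⟨hentry k, ?_⟩
  ext m k'
  rw [of_apply, hentry, Matrix.smul_apply, mul_diagonal, smul_eq_mul]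
  ring
end

section
/- Let M, N be positive integers, let F be an M × N complex matrix, let R > 0 be real, and for θ ∈ ℝ^N define the diagonal matrix A(θ) = i·diag(θ) + R·I (the loaded impedance matrix of a DSA with uncoupled elements, Z = R·I with R = R_r + R_d absorbed into a single positive constant). Let e_1 ∈ ℂ^N be the first standard basis vector. Then for every θ ∈ ℝ^N the matrix A(θ) is invertible and the complex Jacobian matrix −i · F · A(θ)⁻¹ · diag(A(θ)⁻¹ e_1) of the response T(θ) = F A(θ)⁻¹ e_1 has rank at most 1. -/
open Matrix

/-- **Footnote 3 of the paper: uncoupled elements give rank-one Jacobian.**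
For a single-fed DSA with mutually uncoupled elements, i.e. `A(θ) = i·diag(θ) + R·I` with
`R > 0`, the matrix `A(θ)` is invertible and the complex Jacobian matrix
`−i·F·A(θ)⁻¹·diag(A(θ)⁻¹e₁)` of the response `T(θ) = F·A(θ)⁻¹·e₁` has rank at most `1`. -/
theorem uncoupled_dsa_jacobian_rank_le_one (M N : ℕ) (hM : 0 < M) (hN : 0 < N)
    (F : Matrix (Fin M) (Fin N) ℂ) (R : ℝ) (hR : 0 < R) (θ : Fin N → ℝ)
    (A : Matrix (Fin N) (Fin N) ℂ)
    (hA : A = Complex.I • Matrix.diagonal (fun k => (θ k : ℂ)) +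
      (R : ℂ) • (1 : Matrix (Fin N) (Fin N) ℂ)) :
    IsUnit A ∧
      ((-Complex.I) •
        (F * A⁻¹ * Matrix.diagonal (A⁻¹ *ᵥ Pi.single (⟨0, hN⟩ : Fin N) (1 : ℂ)))).rank ≤ 1 := by
  set d : Fin N → ℂ := fun k => Complex.I * θ k + R with hd
  have hd0 : ∀ k, d k ≠ 0 := by
    intro k h
    have : (d k).re = 0 := by rw [h]; simp
    simp [hd] at this
    exact hR.ne' this
  have hAd : A = Matrix.diagonal d := by
    rw [hA]
    ext i j
    by_cases h : i = j <;> simp [h, diagonal, one_apply, hd]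
  have hunit : IsUnit A := by
    rw [hAd, Matrix.isUnit_iff_isUnit_det, det_diagonal, isUnit_iff_ne_zero]
    exact Finset.prod_ne_zero_iff.2 fun k _ => hd0 k
  refine ⟨hunit, ?_⟩
  have hvec : A⁻¹ *ᵥ Pi.single (⟨0, hN⟩ : Fin N) (1 : ℂ) =
      Pi.single (⟨0, hN⟩ : Fin N) ((d ⟨0, hN⟩)⁻¹) := by
    have h1 : A *ᵥ Pi.single (⟨0, hN⟩ : Fin N) ((d ⟨0, hN⟩)⁻¹) =
        Pi.single (⟨0, hN⟩ : Fin N) (1 : ℂ) := by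
      rw [hAd, diagonal_mulVec_single, mul_inv_cancel₀ (hd0 _)]
    rw [← h1, Matrix.mulVec_mulVec, Matrix.nonsing_inv_mul A ((Matrix.isUnit_iff_isUnit_det A).1 hunit), Matrix.one_mulVec]
  rw [hvec]
  have hsmul : ((-Complex.I) •
      (F * A⁻¹ * Matrix.diagonal (Pi.single (⟨0, hN⟩ : Fin N) ((d ⟨0, hN⟩)⁻¹)))) =
      ((-Complex.I) • (F * A⁻¹)) * Matrix.diagonal (Pi.single (⟨0, hN⟩ : Fin N) ((d ⟨0, hN⟩)⁻¹)) := by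
    rw [Matrix.smul_mul]
  rw [hsmul]
  calc _ ≤ (Matrix.diagonal (Pi.single (⟨0, hN⟩ : Fin N) ((d ⟨0, hN⟩)⁻¹))).rank :=
        rank_mul_le_right _ _
    _ ≤ 1 := by
        rw [Matrix.rank_diagonal]
        rw [Fintype.card_le_one_iff]
        rintro ⟨i, hi⟩ ⟨j, hj⟩
        have hi0 : i = ⟨0, hN⟩ := by
          by_contra h; exact hi (Pi.single_eq_of_ne h _)
        have hj0 : j = ⟨0, hN⟩ := by
          by_contra h; exact hj (Pi.single_eq_of_ne h _)
        simp [hi0, hj0]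
end
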